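/- arXiv:1308.6429 — 2 statements merged into one kernel-verified Lean document; each statement's English description precedes it below -/
import Mathlib

section
/- Under the hypotheses: g is a nondegenerate symmetric bilinear form on V, φ² = Id − η⊗ξ with η(X) = g(ξ,X), η(ξ) = 1, g(φX, φY) = −g(X,Y) + η(X)η(Y), R(X,Y,Z,W) = g(R(X,Y)Z, W) is an algebraic curvature tensor (antisymmetric in first and last pairs, symmetric under pair exchange, first Bianchi), φR(X,Y)Z = R(X,Y)φZ, and R(X,Y)ξ = 0; then R(X,Y,φZ,φW) = −R(X,Y,Z,W) for all X,Y,Z,W. -/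
lemma bilinForm_apply_curvature_eq_zero {V : Type*} [AddCommGroup V] [Module ℝ V]
    (g : V →ₗ[ℝ] V →ₗ[ℝ] ℝ) (hg_symm : ∀ x y, g x y = g y x)
    (R : V →ₗ[ℝ] V →ₗ[ℝ] V →ₗ[ℝ] V) (hR2 : ∀ x y z w, g (R x y z) w = - g (R x y w) z)
    {ξ : V} (hRξ : ∀ x y, R x y ξ = 0) (x y z : V) :
    g ξ (R x y z) = 0 := by
  rw [hg_symm, hR2, hRξ, map_zero, LinearMap.zero_apply, neg_zero]

theorem stmt5_general (V : Type*) [AddCommGroup V] [Module ℝ V]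
    (g : V →ₗ[ℝ] V →ₗ[ℝ] ℝ)
    (hg_symm : ∀ x y, g x y = g y x)
    (φ : V →ₗ[ℝ] V) (ξ : V) (η : V →ₗ[ℝ] ℝ)
    (hη : ∀ x, η x = g ξ x)
    (hcompat : ∀ x y, g (φ x) (φ y) = - g x y + η x * η y)
    (R : V →ₗ[ℝ] V →ₗ[ℝ] V →ₗ[ℝ] V)
    (hR2 : ∀ x y z w, g (R x y z) w = - g (R x y w) z)
    (hcomm : ∀ x y z, φ (R x y z) = R x y (φ z))
    (hRξ : ∀ x y, R x y ξ = 0) :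
    ∀ x y z w, g (R x y (φ z)) (φ w) = - g (R x y z) w := by
  intro x y z w
  have hηR : η (R x y z) = 0 := by
    rw [hη, bilinForm_apply_curvature_eq_zero g hg_symm R hR2 hRξ]
  rw [← hcomm, hcompat, hηR, zero_mul, add_zero]

/-- Part of Proposition 1, eq. (4): `R(X,Y,φZ,φW) = −R(X,Y,Z,W)` for an algebraic
curvature tensor commuting with `φ` and killing `ξ`, in an almost para-contact
metric setting. -/
theorem stmt5 (V : Type*) [AddCommGroup V] [Module ℝ V]
    (g : V →ₗ[ℝ] V →ₗ[ℝ] ℝ)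
    (hg_symm : ∀ x y, g x y = g y x)
    (hg_nd : ∀ x, (∀ y, g x y = 0) → x = 0)
    (φ : V →ₗ[ℝ] V) (ξ : V) (η : V →ₗ[ℝ] ℝ)
    (hφ2 : ∀ x, φ (φ x) = x - η x • ξ)
    (hηξ : η ξ = 1)
    (hη : ∀ x, η x = g ξ x)
    (hcompat : ∀ x y, g (φ x) (φ y) = - g x y + η x * η y)
    (R : V →ₗ[ℝ] V →ₗ[ℝ] V →ₗ[ℝ] V)
    (hR1 : ∀ x y z w, g (R x y z) w = - g (R y x z) w)
    (hR2 : ∀ x y z w, g (R x y z) w = - g (R x y w) z)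
    (hR3 : ∀ x y z w, g (R x y z) w = g (R z w x) y)
    (hBianchi : ∀ x y z, R x y z + R y z x + R z x y = 0)
    (hcomm : ∀ x y z, φ (R x y z) = R x y (φ z))
    (hRξ : ∀ x y, R x y ξ = 0) :
    ∀ x y z w, g (R x y (φ z)) (φ w) = - g (R x y z) w :=
  stmt5_general V g hg_symm φ ξ η hη hcompat R hR2 hcomm hRξ
end

section
/- In the Lie algebra 𝔰 over ℝ spanned by K₁,…,K₆ with the only nonzero brackets [K₁,K₄] = −K₂, [K₁,K₅] = −K₃, [K₄,K₅] = K₆, [K₄,K₆] = −K₃, [K₅,K₆] = K₂ (extended bilinearly and antisymmetrically), the Jacobi identity holds, and 𝔰 is 3-step nilpotent: the lower central series satisfies 𝔰¹ = [𝔰,𝔰] = span(K₂,K₃,K₆), 𝔰² = [𝔰,𝔰¹] = span(K₂,K₃), 𝔰³ = [𝔰,𝔰²] = 0. -/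
/-! The bracket only sees the `K₁, K₄, K₅, K₆`-components of its arguments and takes values in
`span(K₂, K₃, K₆)`, and `K₂, K₃, K₆` are themselves brackets of basis vectors; so `[𝔰, 𝔰]` is that
span. A vector of `span(K₂, K₃, K₆)` has no `K₄, K₅`-components, so bracketing with it kills the
`K₆`-component; a vector of `span(K₂, K₃)` has none of the components the bracket sees. -/

/-- The bracket of the Lie algebra `𝔰` of Section 7.3 on `ℝ⁶`, in the basis
`K₁,…,K₆` (indices `0,…,5`), with the only nonzero brackets
`[K₁,K₄] = −K₂`, `[K₁,K₅] = −K₃`, `[K₄,K₅] = K₆`, `[K₄,K₆] = −K₃`,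
`[K₅,K₆] = K₂`. -/
def sBr (x y : Fin 6 → ℝ) : Fin 6 → ℝ := fun i =>
  if i = 1 then -(x 0 * y 3 - x 3 * y 0) + (x 4 * y 5 - x 5 * y 4)
  else if i = 2 then -(x 0 * y 4 - x 4 * y 0) - (x 3 * y 5 - x 5 * y 3)
  else if i = 5 then x 3 * y 4 - x 4 * y 3
  else 0

open Submodule

/-- The basis vector `K_{i+1}`. -/
local notation "K" i => (Pi.single i (1 : ℝ) : Fin 6 → ℝ)

lemma apply_eq_zero_of_mem_span {R ι : Type*} [Semiring R] {S : Set (ι → R)} {y : ι → R}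
    (hy : y ∈ span R S) (j : ι) (hS : ∀ v ∈ S, v j = 0) : y j = 0 :=
  (span_le (p := LinearMap.ker (LinearMap.proj j))).2 hS hy

lemma sBr_antisymm (x y : Fin 6 → ℝ) : sBr x y = - sBr y x := by
  funext i; fin_cases i <;> simp [sBr] <;> ring

lemma sBr_jacobi (x y z : Fin 6 → ℝ) :
    sBr x (sBr y z) + sBr y (sBr z x) + sBr z (sBr x y) = 0 := by
  funext i; fin_cases i <;> simp [sBr] <;> ring

lemma sBr_K₄_K₅ : sBr (K 3) (K 4) = K 5 := by
  funext i; fin_cases i <;> simp [sBr]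

lemma sBr_K₅_K₆ : sBr (K 4) (K 5) = K 1 := by
  funext i; fin_cases i <;> simp [sBr]

lemma sBr_neg_K₄_K₆ : sBr (-K 3) (K 5) = K 2 := by
  funext i; fin_cases i <;> simp [sBr]

lemma sBr_eq_sum (x y : Fin 6 → ℝ) :
    sBr x y = sBr x y 1 • (K 1) + sBr x y 2 • (K 2) + sBr x y 5 • (K 5) := by
  funext i; fin_cases i <;> simp [sBr]

lemma sBr_apply_five_eq_zero {x y : Fin 6 → ℝ} (h3 : y 3 = 0) (h4 : y 4 = 0) :
    sBr x y 5 = 0 := by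
  simp [sBr, h3, h4]

lemma sBr_eq_zero {x y : Fin 6 → ℝ} (h0 : y 0 = 0) (h3 : y 3 = 0) (h4 : y 4 = 0)
    (h5 : y 5 = 0) : sBr x y = 0 := by
  funext i; fin_cases i <;> simp [sBr, h0, h3, h4, h5]

theorem span_sBr_eq :
    span ℝ {w : Fin 6 → ℝ | ∃ x y, sBr x y = w} = span ℝ {K 1, K 2, K 5} := by
  refine span_eq_of_le _ ?_ ?_
  · rintro w ⟨x, y, rfl⟩
    rw [sBr_eq_sum x y]
    exact add_mem (add_mem (smul_mem _ _ (subset_span (by simp)))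
      (smul_mem _ _ (subset_span (by simp)))) (smul_mem _ _ (subset_span (by simp)))
  · rw [span_le]
    rintro w (rfl | rfl | rfl)
    · exact subset_span ⟨_, _, sBr_K₅_K₆⟩
    · exact subset_span ⟨_, _, sBr_neg_K₄_K₆⟩
    · exact subset_span ⟨_, _, sBr_K₄_K₅⟩

theorem sBr_mem_span_K₂_K₃ (x : Fin 6 → ℝ) {y : Fin 6 → ℝ} (hy : y ∈ span ℝ {K 1, K 2, K 5}) :
    sBr x y ∈ span ℝ {K 1, K 2} := by
  have h5 : sBr x y 5 = 0 :=
    sBr_apply_five_eq_zero (apply_eq_zero_of_mem_span hy 3 (by simp))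
      (apply_eq_zero_of_mem_span hy 4 (by simp))
  rw [sBr_eq_sum, h5, zero_smul, add_zero]
  exact mem_span_pair.2 ⟨_, _, rfl⟩

theorem span_sBr_derived_eq :
    span ℝ {w : Fin 6 → ℝ | ∃ x y,
        y ∈ span ℝ {w' : Fin 6 → ℝ | ∃ x' y', sBr x' y' = w'} ∧ sBr x y = w}
      = span ℝ {K 1, K 2} := by
  rw [span_sBr_eq]
  refine span_eq_of_le _ ?_ ?_
  · rintro w ⟨x, y, hy, rfl⟩
    exact sBr_mem_span_K₂_K₃ x hy
  · have hK₆ : (K 5) ∈ span ℝ {K 1, K 2, K 5} := subset_span (by simp)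
    rw [span_le]
    rintro w (rfl | rfl)
    · exact subset_span ⟨_, _, hK₆, sBr_K₅_K₆⟩
    · exact subset_span ⟨_, _, hK₆, sBr_neg_K₄_K₆⟩

theorem sBr_eq_zero_of_mem_span_K₂_K₃ (x : Fin 6 → ℝ) {y : Fin 6 → ℝ}
    (hy : y ∈ span ℝ {K 1, K 2}) : sBr x y = 0 :=
  sBr_eq_zero (apply_eq_zero_of_mem_span hy 0 (by simp))
    (apply_eq_zero_of_mem_span hy 3 (by simp)) (apply_eq_zero_of_mem_span hy 4 (by simp))
    (apply_eq_zero_of_mem_span hy 5 (by simp))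

/-- Section 7.3: the bracket table of `𝔰` defines a Lie algebra (antisymmetry
and the Jacobi identity hold) which is 3-step nilpotent: its lower central
series is `𝔰¹ = span(K₂,K₃,K₆)`, `𝔰² = span(K₂,K₃)`, `𝔰³ = 0`. -/
theorem stmt18 :
    (∀ x y, sBr x y = - sBr y x) ∧
    (∀ x y z, sBr x (sBr y z) + sBr y (sBr z x) + sBr z (sBr x y) = 0) ∧
    Submodule.span ℝ {w : Fin 6 → ℝ | ∃ x y, sBr x y = w}
      = Submodule.span ℝ {Pi.single 1 1, Pi.single 2 1, Pi.single 5 1} ∧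
    Submodule.span ℝ {w : Fin 6 → ℝ | ∃ x y,
        y ∈ Submodule.span ℝ {w' : Fin 6 → ℝ | ∃ x' y', sBr x' y' = w'} ∧ sBr x y = w}
      = Submodule.span ℝ {Pi.single 1 1, Pi.single 2 1} ∧
    (∀ x y, y ∈ (Submodule.span ℝ {Pi.single 1 1, Pi.single 2 1} : Submodule ℝ (Fin 6 → ℝ))
      → sBr x y = 0) :=
  ⟨sBr_antisymm, sBr_jacobi, span_sBr_eq, span_sBr_derived_eq, sBr_eq_zero_of_mem_span_K₂_K₃⟩
end
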